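/- Let A(D̄) be the disk algebra of continuous functions on the closed unit disk D̄ ⊆ ℂ that are holomorphic on the open unit disk, and let S(z) = exp(-(1+z)/(1-z)) on D̄∖{1}. Then S is a multiplier for the maximal ideal M(1) = {f ∈ A(D̄) : f(1) = 0}: the set {f ∈ A(D̄) : S·f on D̄∖{1} extends continuously to an element of A(D̄)} equals M(1), and the function (1-z)·S(z) extends to an element of A(D̄) that is not a zero divisor in A(D̄). -/

import Mathlib

open scoped Classical

/-- Extension by `0` of a continuous function on a set `K ⊆ ℂ` to `ℂ`. -/
noncomputable def extendByZero1 {K : Set ℂ} (f : C(K, ℂ)) : ℂ → ℂ :=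
  fun z => if h : z ∈ K then f ⟨z, h⟩ else 0

/-- `A(K)` for `K ⊆ ℂ` compact: continuous on `K`, holomorphic on `K°`. -/
noncomputable def algebraAK (K : Set ℂ) : Subalgebra ℂ C(K, ℂ) where
  carrier := {f | DifferentiableOn ℂ (extendByZero1 f) (interior K)}
  mul_mem' := by
    intro f g hf hg
    exact (hf.mul hg).congr fun z hz => by
      simp [extendByZero1, dif_pos (interior_subset hz)]
  add_mem' := by
    intro f g hf hg
    exact (hf.add hg).congr fun z hz => by
      simp [extendByZero1, dif_pos (interior_subset hz)]
  algebraMap_mem' := by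
    intro c
    exact (differentiableOn_const c).congr fun z hz => by
      simp [extendByZero1, dif_pos (interior_subset hz)]

/-- The closed unit disk. -/
def closedUnitDisk : Set ℂ := Metric.closedBall (0 : ℂ) 1

/-- The point `1` of the closed unit disk. -/
def onePt : ↥closedUnitDisk := ⟨1, by simp [closedUnitDisk]⟩

/-- The disk algebra `A(D̄)`. -/
noncomputable def diskAlg : Subalgebra ℂ C(closedUnitDisk, ℂ) := algebraAK closedUnitDisk

open Complex

noncomputable def Sfn (z : ℂ) : ℂ := Complex.exp (-((1 + z) / (1 - z)))

lemma re_frac (z : ℂ) : ((1 + z) / (1 - z)).re = (1 - normSq z) / normSq (1 - z) := by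
  rw [Complex.div_re]; simp [Complex.normSq_apply]; ring

lemma abs_Sfn (z : ℂ) : ‖Sfn z‖ = Real.exp (-((1 - normSq z) / normSq (1 - z))) := by
  rw [Sfn, Complex.norm_exp, Complex.neg_re, re_frac]

lemma abs_disk (z : ↥closedUnitDisk) : ‖(z:ℂ)‖ ≤ 1 := by
  have := z.2
  simp only [closedUnitDisk, Metric.mem_closedBall, Complex.dist_eq, sub_zero] at this
  exact this

lemma abs_Sfn_le_one {z : ℂ} (hz : ‖z‖ ≤ 1) : ‖Sfn z‖ ≤ 1 := by
  rw [abs_Sfn, Real.exp_le_one_iff, neg_nonpos]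
  apply div_nonneg _ (normSq_nonneg _)
  have : normSq z ≤ 1 := by
    rw [← Complex.sq_norm]; nlinarith [norm_nonneg z]
  linarith

lemma abs_Sfn_eq_one {z : ℂ} (hz : ‖z‖ = 1) : ‖Sfn z‖ = 1 := by
  rw [abs_Sfn]
  have : normSq z = 1 := by rw [← Complex.sq_norm, hz]; norm_num
  simp [this]

lemma Sfn_cont {z : ℂ} (hz : z ≠ 1) : ContinuousAt Sfn z := by
  apply Complex.continuous_exp.continuousAt.comp
  apply ContinuousAt.neg
  exact ContinuousAt.div (by fun_prop) (by fun_prop) (sub_ne_zero_of_ne (Ne.symm hz))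

lemma Sfn_diff {z : ℂ} (hz : z ≠ 1) : DifferentiableAt ℂ Sfn z := by
  apply DifferentiableAt.cexp
  apply DifferentiableAt.neg
  exact DifferentiableAt.div (by fun_prop) (by fun_prop) (sub_ne_zero_of_ne (Ne.symm hz))

lemma interior_disk : interior closedUnitDisk = Metric.ball (0:ℂ) 1 :=
  interior_closedBall (0:ℂ) one_ne_zero

lemma ball_ne_one {z : ℂ} (hz : z ∈ Metric.ball (0:ℂ) 1) : z ≠ 1 := by
  intro h; subst h; simp at hz

lemma ne_onePt_iff (z : ↥closedUnitDisk) : z ≠ onePt ↔ (z:ℂ) ≠ 1 := by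
  constructor
  · intro h he; exact h (Subtype.ext he)
  · intro h he; exact h (by rw [he]; rfl)

/-- Main construction: if `f ∈ A(D̄)` with `f(1) = 0`, then `S·f` extends. -/
lemma mul_Sfn_mem (f : ↥diskAlg) (hf1 : (f : C(closedUnitDisk,ℂ)) onePt = 0) :
    ∃ g : ↥diskAlg,
      (∀ z : ↥closedUnitDisk, z ≠ onePt →
        (g : C(closedUnitDisk,ℂ)) z = Sfn z * (f : C(closedUnitDisk,ℂ)) z) ∧
      (g : C(closedUnitDisk,ℂ)) onePt = 0 := by
  classical
  set F : C(closedUnitDisk, ℂ) := (f : C(closedUnitDisk,ℂ)) with hF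
  set g0 : ↥closedUnitDisk → ℂ := fun z => if (z:ℂ) = 1 then 0 else Sfn z * F z with hg0
  have hbd : ∀ z : ↥closedUnitDisk, ‖g0 z‖ ≤ ‖F z‖ := by
    intro z
    by_cases h : (z:ℂ) = 1
    · simp [hg0, h]
    · simp only [hg0, if_neg h]
      rw [norm_mul]
      calc ‖Sfn (z:ℂ)‖ * ‖F z‖ ≤ 1 * ‖F z‖ := by
            apply mul_le_mul_of_nonneg_right _ (norm_nonneg _)
            exact abs_Sfn_le_one (abs_disk z)
        _ = ‖F z‖ := one_mul _
  have hcont : Continuous g0 := by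
    rw [continuous_iff_continuousAt]
    intro z0
    by_cases h : (z0:ℂ) = 1
    · have hz0 : z0 = onePt := Subtype.ext h
      subst hz0
      have h0 : g0 onePt = 0 := by simp only [hg0]; exact if_pos rfl
      rw [ContinuousAt, h0]
      apply squeeze_zero_norm hbd
      have : Filter.Tendsto (fun z => ‖F z‖) (nhds onePt) (nhds ‖F onePt‖) :=
        (F.continuous.norm.continuousAt)
      rwa [hf1, norm_zero] at this
    · have hU : IsOpen {z : ↥closedUnitDisk | (z:ℂ) ≠ 1} :=
        isOpen_compl_singleton.preimage continuous_subtype_val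
      have heq : g0 =ᶠ[nhds z0] fun z => Sfn (z:ℂ) * F z := by
        filter_upwards [hU.mem_nhds h] with z hz
        simp [hg0, if_neg hz]
      apply ContinuousAt.congr _ heq.symm
      exact ((Sfn_cont h).comp continuous_subtype_val.continuousAt).mul F.continuous.continuousAt
  refine ⟨⟨⟨g0, hcont⟩, ?_⟩, ?_, by show g0 onePt = 0; simp only [hg0]; exact if_pos rfl⟩
  · show DifferentiableOn ℂ (extendByZero1 ⟨g0, hcont⟩) (interior closedUnitDisk)
    rw [interior_disk]
    have hf2 : DifferentiableOn ℂ (extendByZero1 F) (Metric.ball (0:ℂ) 1) := by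
      have := f.2
      rwa [show (↑f ∈ diskAlg) = DifferentiableOn ℂ (extendByZero1 F) (interior closedUnitDisk) from rfl, interior_disk] at this
    have : DifferentiableOn ℂ (fun z => Sfn z * extendByZero1 F z) (Metric.ball (0:ℂ) 1) :=
      DifferentiableOn.mul (fun z hz => (Sfn_diff (ball_ne_one hz)).differentiableWithinAt) hf2
    apply this.congr
    intro z hz
    have hzK : z ∈ closedUnitDisk := Metric.ball_subset_closedBall hz
    simp only [extendByZero1, dif_pos hzK]
    show g0 ⟨z, hzK⟩ = _
    simp [hg0, if_neg (ball_ne_one hz)]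
  · intro z hz
    show g0 z = _
    simp [hg0, if_neg ((ne_onePt_iff z).1 hz)]

lemma abs_Sfn_real (r : ℝ) : ‖Sfn r‖ = Real.exp (-((1+r)/(1-r))) := by
  rw [Sfn, Complex.norm_exp]
  congr 1
  have : -((1 + (r:ℂ)) / (1 - (r:ℂ))) = ((-((1+r)/(1-r)) : ℝ) : ℂ) := by push_cast; ring
  rw [this, Complex.ofReal_re]

lemma forward_lemma (f g : ↥diskAlg)
    (hg : ∀ z : ↥closedUnitDisk, z ≠ onePt →
      (g : C(closedUnitDisk,ℂ)) z = Sfn z * (f : C(closedUnitDisk,ℂ)) z) :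
    (f : C(closedUnitDisk,ℂ)) onePt = 0 := by
  set F : C(closedUnitDisk, ℂ) := (f : C(closedUnitDisk,ℂ))
  set G : C(closedUnitDisk, ℂ) := (g : C(closedUnitDisk,ℂ))
  -- radial sequence
  have hrmem : ∀ n : ℕ, (((1 - 1/(n+1) : ℝ) : ℂ)) ∈ closedUnitDisk := by
    intro n
    have h1 : (0:ℝ) < 1/(n+1) := by positivity
    have h2 : (1:ℝ)/(n+1) ≤ 1 := by
      rw [div_le_one (by positivity)]; linarith [Nat.cast_nonneg (α := ℝ) n]
    simp only [closedUnitDisk, Metric.mem_closedBall, Complex.dist_eq, sub_zero]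
    rw [Complex.norm_real, Real.norm_eq_abs, abs_of_nonneg (by linarith)]
    linarith
  set u : ℕ → ↥closedUnitDisk := fun n => ⟨((1 - 1/(n+1) : ℝ) : ℂ), hrmem n⟩ with hu
  have hune : ∀ n, u n ≠ onePt := by
    intro n
    rw [ne_onePt_iff]
    intro h
    have h1 : (0:ℝ) < 1/(n+1) := by positivity
    have h' : ((1 - 1/(n+1) : ℝ) : ℂ) = 1 := h
    have : (1 - 1/(n+1) : ℝ) = 1 := by exact_mod_cast h'
    linarith
  have hutend : Filter.Tendsto u Filter.atTop (nhds onePt) := by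
    rw [tendsto_subtype_rng]
    show Filter.Tendsto (fun n : ℕ => ((1 - 1/(n+1) : ℝ) : ℂ)) Filter.atTop (nhds 1)
    have : Filter.Tendsto (fun n : ℕ => (1 - 1/(n+1) : ℝ)) Filter.atTop (nhds 1) := by
      have := tendsto_one_div_add_atTop_nhds_zero_nat (𝕜 := ℝ)
      have h2 := (tendsto_const_nhds (x := (1:ℝ)) (f := Filter.atTop (α := ℕ))).sub this
      simpa using h2
    have h3 := (Complex.continuous_ofReal.tendsto 1).comp this
    simpa [Function.comp_def] using h3
  -- S at radial points tends to 0
  have hStend : Filter.Tendsto (fun n => Sfn ((u n : ℂ))) Filter.atTop (nhds 0) := by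
    rw [tendsto_zero_iff_norm_tendsto_zero]
    have habs : ∀ n : ℕ, ‖Sfn ((u n : ℂ))‖ = Real.exp (1 - 2*(n+1)) := by
      intro n
      show ‖_‖ = _
      rw [hu]
      simp only []
      rw [abs_Sfn_real]
      congr 1
      have hne : ((n:ℝ)+1) ≠ 0 := by positivity
      field_simp
      ring
    simp only [habs]
    apply Real.tendsto_exp_atBot.comp
    apply Filter.tendsto_atBot_mono (f := fun n : ℕ => -(n:ℝ)) (g := fun n : ℕ => (1 - 2*((n:ℝ)+1)))
    · intro n; nlinarith [Nat.cast_nonneg (α := ℝ) n]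
    · exact Filter.tendsto_neg_atTop_atBot.comp tendsto_natCast_atTop_atTop
  have hg1 : G onePt = 0 := by
    have h1 : Filter.Tendsto (fun n => G (u n)) Filter.atTop (nhds (G onePt)) :=
      (G.continuous.continuousAt.tendsto).comp hutend
    have h2 : Filter.Tendsto (fun n => G (u n)) Filter.atTop (nhds 0) := by
      have he : (fun n => G (u n)) = fun n => Sfn ((u n : ℂ)) * F (u n) := by
        funext n; exact hg (u n) (hune n)
      rw [he]
      have h3 : Filter.Tendsto (fun n => F (u n)) Filter.atTop (nhds (F onePt)) :=
        (F.continuous.continuousAt.tendsto).comp hutend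
      have := hStend.mul h3
      simpa using this
    exact tendsto_nhds_unique h1 h2
  -- boundary sequence
  have hvmem : ∀ n : ℕ, Complex.exp (((1/(n+1) : ℝ) : ℂ) * Complex.I) ∈ closedUnitDisk := by
    intro n
    simp only [closedUnitDisk, Metric.mem_closedBall, Complex.dist_eq, sub_zero]
    rw [Complex.norm_exp_ofReal_mul_I]
  set v : ℕ → ↥closedUnitDisk := fun n => ⟨Complex.exp (((1/(n+1) : ℝ) : ℂ) * Complex.I), hvmem n⟩ with hv
  have hvne : ∀ n, v n ≠ onePt := by
    intro n
    rw [ne_onePt_iff]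
    intro h
    rw [Complex.exp_eq_one_iff] at h
    obtain ⟨k, hk⟩ := h
    have hk' : ((1/(n+1) : ℝ) : ℂ) * Complex.I = ((k:ℂ) * (2 * Real.pi)) * Complex.I := by
      rw [hk]; ring
    have hI : ((1/(n+1) : ℝ) : ℂ) = (k:ℂ) * (2 * Real.pi) :=
      mul_right_cancel₀ Complex.I_ne_zero hk'
    have hreal : (1/(n+1) : ℝ) = (k:ℝ) * (2 * Real.pi) := by exact_mod_cast hI
    have h1 : (0:ℝ) < 1/(n+1) := by positivity
    have h2 : (1:ℝ)/(n+1) ≤ 1 := by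
      rw [div_le_one (by positivity)]; linarith [Nat.cast_nonneg (α := ℝ) n]
    have hpi : (2:ℝ) * Real.pi > 6 := by
      have := Real.pi_gt_three
      linarith
    rcases lt_trichotomy k 0 with hk0 | hk0 | hk0
    · have hk1 : k ≤ -1 := by omega
      have : (k:ℝ) ≤ -1 := by exact_mod_cast hk1
      nlinarith
    · subst hk0; simp at hreal; linarith
    · have : (1:ℝ) ≤ (k:ℝ) := by exact_mod_cast hk0
      nlinarith
  have hvtend : Filter.Tendsto v Filter.atTop (nhds onePt) := by
    rw [tendsto_subtype_rng]
    have h0 : Filter.Tendsto (fun n : ℕ => ((1/(n+1) : ℝ) : ℂ) * Complex.I) Filter.atTop (nhds 0) := by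
      have := (Complex.continuous_ofReal.tendsto 0).comp tendsto_one_div_add_atTop_nhds_zero_nat
      have h2 := this.mul_const Complex.I
      simpa using h2
    have := (Complex.continuous_exp.tendsto 0).comp h0
    show Filter.Tendsto (fun n : ℕ => Complex.exp (((1/(n+1) : ℝ) : ℂ) * Complex.I)) Filter.atTop (nhds 1)
    simpa [Function.comp_def] using this
  have habsv : ∀ n, ‖G (v n)‖ = ‖F (v n)‖ := by
    intro n
    rw [hg (v n) (hvne n), norm_mul]
    have : ‖Sfn ((v n : ℂ))‖ = 1 := by
      show ‖_‖ = 1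
      apply abs_Sfn_eq_one
      show ‖_‖ = 1
      exact Complex.norm_exp_ofReal_mul_I _
    rw [this, one_mul]
  have h1 : Filter.Tendsto (fun n => ‖G (v n)‖) Filter.atTop (nhds 0) := by
    have := ((G.continuous.norm.continuousAt.tendsto).comp hvtend)
    rwa [hg1, norm_zero] at this
  have h2 : Filter.Tendsto (fun n => ‖G (v n)‖) Filter.atTop (nhds ‖F onePt‖) := by
    simp only [habsv]
    exact (F.continuous.norm.continuousAt.tendsto).comp hvtend
  have := tendsto_nhds_unique h1 h2
  exact norm_eq_zero.mp this.symm

/-- The function `1 - z` as an element of the disk algebra. -/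
noncomputable def pElt : ↥diskAlg := by
  refine ⟨⟨fun z => 1 - (z:ℂ), by fun_prop⟩, ?_⟩
  show DifferentiableOn ℂ (extendByZero1 _) (interior closedUnitDisk)
  apply ((differentiable_const (1:ℂ)).sub differentiable_id).differentiableOn.congr
  intro z hz
  simp [extendByZero1, dif_pos (interior_subset hz)]

lemma pElt_apply (z : ↥closedUnitDisk) : (pElt : C(closedUnitDisk,ℂ)) z = 1 - (z:ℂ) := rfl

lemma dense_ball_pre :
    Dense {z : ↥closedUnitDisk | (z:ℂ) ∈ Metric.ball (0:ℂ) 1} := by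
  intro x
  rw [closure_subtype]
  have himg : Subtype.val '' {z : ↥closedUnitDisk | (z:ℂ) ∈ Metric.ball (0:ℂ) 1}
      = Metric.ball (0:ℂ) 1 := by
    apply Set.Subset.antisymm
    · rintro w ⟨z, hz, rfl⟩; exact hz
    · intro w hw; exact ⟨⟨w, Metric.ball_subset_closedBall hw⟩, hw, rfl⟩
  rw [himg, closure_ball (0:ℂ) one_ne_zero]
  exact x.2


/-- The singular inner function `S(z) = exp(-(1+z)/(1-z))` is a multiplier for the
maximal ideal `M(1)` of the disk algebra `A(D̄)`: the set of `f ∈ A(D̄)` such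
that `S·f` (on `D̄ \ {1}`) extends continuously to an element of `A(D̄)` equals
`M(1) = {f : f(1) = 0}`, and `(1-z)·S(z)` extends to an element of `A(D̄)` that
is not a zero divisor. -/
theorem noncoherent_stmt9 :
    (∀ f : ↥diskAlg,
      ((∃ g : ↥diskAlg, ∀ z : ↥closedUnitDisk, z ≠ onePt →
          (g : C(closedUnitDisk, ℂ)) z
            = Complex.exp (-((1 + (z : ℂ)) / (1 - (z : ℂ)))) *
                (f : C(closedUnitDisk, ℂ)) z)
        ↔ (f : C(closedUnitDisk, ℂ)) onePt = 0)) ∧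
    (∃ q : ↥diskAlg,
      (∀ z : ↥closedUnitDisk, z ≠ onePt →
        (q : C(closedUnitDisk, ℂ)) z
          = (1 - (z : ℂ)) * Complex.exp (-((1 + (z : ℂ)) / (1 - (z : ℂ))))) ∧
      ∀ b : ↥diskAlg, q * b = 0 → b = 0) := by
  constructor
  · intro f
    constructor
    · rintro ⟨g, hg⟩
      exact forward_lemma f g hg
    · intro hf1
      obtain ⟨g, hg, -⟩ := mul_Sfn_mem f hf1
      exact ⟨g, hg⟩
  · have hp1 : (pElt : C(closedUnitDisk,ℂ)) onePt = 0 := by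
      rw [pElt_apply]
      show 1 - (1:ℂ) = 0
      ring
    obtain ⟨q, hq, hq1⟩ := mul_Sfn_mem pElt hp1
    refine ⟨q, ?_, ?_⟩
    · intro z hz
      rw [hq z hz, pElt_apply]
      rw [Sfn]
      ring
    · intro b hb
      have hzero : ∀ z : ↥closedUnitDisk,
          (q : C(closedUnitDisk,ℂ)) z * (b : C(closedUnitDisk,ℂ)) z = 0 := by
        intro z
        have : ((q * b : ↥diskAlg) : C(closedUnitDisk,ℂ)) = 0 := by
          rw [hb]; rfl
        have h2 : ((q : C(closedUnitDisk,ℂ)) * (b : C(closedUnitDisk,ℂ))) z = (0 : C(closedUnitDisk,ℂ)) z := by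
          rw [← this]; rfl
        simpa using h2
      have hbz : ∀ z : ↥closedUnitDisk, (z:ℂ) ∈ Metric.ball (0:ℂ) 1 →
          (b : C(closedUnitDisk,ℂ)) z = 0 := by
        intro z hz
        have hne : z ≠ onePt := (ne_onePt_iff z).2 (ball_ne_one hz)
        have hqz : (q : C(closedUnitDisk,ℂ)) z ≠ 0 := by
          rw [hq z hne, pElt_apply]
          exact mul_ne_zero (Complex.exp_ne_zero _) (sub_ne_zero_of_ne (Ne.symm (ball_ne_one hz)))
        have := hzero z
        exact (mul_eq_zero.mp this).resolve_left hqz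
      have hball : {z : ↥closedUnitDisk | (z:ℂ) ∈ Metric.ball (0:ℂ) 1}
          ⊆ {z | (b : C(closedUnitDisk,ℂ)) z = 0} :=
        fun z hz => hbz z hz
      have hclosed : IsClosed {z : ↥closedUnitDisk | (b : C(closedUnitDisk,ℂ)) z = 0} :=
        isClosed_eq (ContinuousMap.continuous _) continuous_const
      have hall : ∀ z : ↥closedUnitDisk, (b : C(closedUnitDisk,ℂ)) z = 0 := by
        intro z
        have := closure_minimal hball hclosed
        have hz := dense_ball_pre z
        exact this (by simpa using hz)
      apply Subtype.ext
      exact ContinuousMap.ext hall
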